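/- arXiv:1003.1661 — 2 statements merged into one kernel-verified Lean document; each statement's English description precedes it below -/
import Mathlib

section
/- For all k ∈ ℝ³, p ∈ ℝ³, and M ≥ 0: (1/2)(√(|p+k|²+M²) + √(|p−k|²+M²) − 2√(|p|²+M²)) ≤ √(|k|²+M²) − M. -/
set_option maxHeartbeats 1000000 in
/-- Scalar version of the key lemma: second-difference bound for the relativistic
dispersion relation `ω_M(p) = √(|p|²+M²)`. -/
theorem dispersion_second_difference_bound (M : ℝ) (hM : 0 ≤ M)
    (k p : EuclideanSpace ℝ (Fin 3)) :
    (1 / 2) * (Real.sqrt (‖p + k‖ ^ 2 + M ^ 2) + Real.sqrt (‖p - k‖ ^ 2 + M ^ 2)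
        - 2 * Real.sqrt (‖p‖ ^ 2 + M ^ 2))
      ≤ Real.sqrt (‖k‖ ^ 2 + M ^ 2) - M := by
  have hpar := parallelogram_law_with_norm ℝ p k
  set a := Real.sqrt (‖p + k‖ ^ 2 + M ^ 2) with ha
  set b := Real.sqrt (‖p - k‖ ^ 2 + M ^ 2) with hb
  set c := Real.sqrt (‖p‖ ^ 2 + M ^ 2) with hc
  set d := Real.sqrt (‖k‖ ^ 2 + M ^ 2) with hd
  have hxa : (0:ℝ) ≤ ‖p + k‖ ^ 2 + M ^ 2 := by positivity
  have hxb : (0:ℝ) ≤ ‖p - k‖ ^ 2 + M ^ 2 := by positivity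
  have hxc : (0:ℝ) ≤ ‖p‖ ^ 2 + M ^ 2 := by positivity
  have hxd : (0:ℝ) ≤ ‖k‖ ^ 2 + M ^ 2 := by positivity
  have ha2 : a ^ 2 = ‖p + k‖ ^ 2 + M ^ 2 := Real.sq_sqrt hxa
  have hb2 : b ^ 2 = ‖p - k‖ ^ 2 + M ^ 2 := Real.sq_sqrt hxb
  have hc2 : c ^ 2 = ‖p‖ ^ 2 + M ^ 2 := Real.sq_sqrt hxc
  have hd2 : d ^ 2 = ‖k‖ ^ 2 + M ^ 2 := Real.sq_sqrt hxd
  have ha0 : 0 ≤ a := Real.sqrt_nonneg _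
  have hb0 : 0 ≤ b := Real.sqrt_nonneg _
  have hcM : M ≤ c := by
    have h := Real.sqrt_le_sqrt (show M ^ 2 ≤ ‖p‖ ^ 2 + M ^ 2 by nlinarith [sq_nonneg ‖p‖])
    rwa [Real.sqrt_sq hM] at h
  have hdM : M ≤ d := by
    have h := Real.sqrt_le_sqrt (show M ^ 2 ≤ ‖k‖ ^ 2 + M ^ 2 by nlinarith [sq_nonneg ‖k‖])
    rwa [Real.sqrt_sq hM] at h
  -- parallelogram law in `^2` form
  have hpar' : ‖p + k‖ ^ 2 + ‖p - k‖ ^ 2 = 2 * ‖p‖ ^ 2 + 2 * ‖k‖ ^ 2 := by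
    nlinarith [hpar]
  -- hence a² + b² = 2(c² + d² - M²)
  have hsum : a ^ 2 + b ^ 2 = 2 * (c ^ 2 + d ^ 2 - M ^ 2) := by
    rw [ha2, hb2, hc2, hd2]; linarith
  have hkey : a + b ≤ 2 * (c + d - M) := by
    have e1 : (a + b) ^ 2 ≤ 2 * (a ^ 2 + b ^ 2) := by nlinarith [sq_nonneg (a - b)]
    have e3 : 4 * (c ^ 2 + d ^ 2 - M ^ 2) ≤ (2 * (c + d - M)) ^ 2 := by
      nlinarith [mul_nonneg (sub_nonneg.2 hcM) (sub_nonneg.2 hdM)]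
    have h1 : (a + b) ^ 2 ≤ (2 * (c + d - M)) ^ 2 := by linarith
    have h2 : 0 ≤ 2 * (c + d - M) := by linarith
    have h3 := Real.sqrt_le_sqrt h1
    rwa [Real.sqrt_sq (by linarith : (0:ℝ) ≤ a + b), Real.sqrt_sq h2] at h3
  linarith
end

section
/- For k, p ∈ ℝ³ and M ≥ 0, one has the inequality (√(|p+k|²+M²) + √(|p−k|²+M²))² ≤ 4(√(|k|²+M²) − M + √(|p|²+M²))². -/
/-- Squared form of the scalar key inequality. -/
theorem dispersion_squared_inequality (M : ℝ) (hM : 0 ≤ M)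
    (k p : EuclideanSpace ℝ (Fin 3)) :
    (Real.sqrt (‖p + k‖ ^ 2 + M ^ 2) + Real.sqrt (‖p - k‖ ^ 2 + M ^ 2)) ^ 2
      ≤ 4 * (Real.sqrt (‖k‖ ^ 2 + M ^ 2) - M + Real.sqrt (‖p‖ ^ 2 + M ^ 2)) ^ 2 := by
  set a := Real.sqrt (‖p + k‖ ^ 2 + M ^ 2) with ha
  set b := Real.sqrt (‖p - k‖ ^ 2 + M ^ 2) with hb
  set ek := Real.sqrt (‖k‖ ^ 2 + M ^ 2) with hek
  set ep := Real.sqrt (‖p‖ ^ 2 + M ^ 2) with hep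
  have ha2 : a ^ 2 = ‖p + k‖ ^ 2 + M ^ 2 := Real.sq_sqrt (by positivity)
  have hb2 : b ^ 2 = ‖p - k‖ ^ 2 + M ^ 2 := Real.sq_sqrt (by positivity)
  have hek2 : ek ^ 2 = ‖k‖ ^ 2 + M ^ 2 := Real.sq_sqrt (by positivity)
  have hep2 : ep ^ 2 = ‖p‖ ^ 2 + M ^ 2 := Real.sq_sqrt (by positivity)
  have hpar : ‖p + k‖ ^ 2 + ‖p - k‖ ^ 2 = 2 * (‖p‖ ^ 2 + ‖k‖ ^ 2) := by
    rw [norm_add_sq_real, norm_sub_sq_real]; ring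
  have hMek : M ≤ ek := by
    rw [hek]
    calc M = Real.sqrt (M ^ 2) := (Real.sqrt_sq hM).symm
    _ ≤ _ := Real.sqrt_le_sqrt (by nlinarith [sq_nonneg ‖k‖, sq_nonneg ‖p‖])
  have hMep : M ≤ ep := by
    rw [hep]
    calc M = Real.sqrt (M ^ 2) := (Real.sqrt_sq hM).symm
    _ ≤ _ := Real.sqrt_le_sqrt (by nlinarith [sq_nonneg ‖k‖, sq_nonneg ‖p‖])
  have hab : 2 * a * b ≤ a ^ 2 + b ^ 2 := two_mul_le_add_sq a b
  have hprod : 0 ≤ (ek - M) * (ep - M) :=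
    mul_nonneg (by linarith) (by linarith)
  nlinarith [hab, hprod, ha2, hb2, hek2, hep2, hpar]
end
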